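/- For each k ≥ 1 and each n ∈ ℕ, the set of k-tuples (x_1,...,x_k) ∈ ℕ^k with g_k(x_1,...,x_k) ≤ n is finite, and g_k restricted to tuples with fixed coordinate sum s is order-embedding into the interval [h(k,s), h(k,s+1)). -/
import Mathlib


/-- h(p,s) = C(s+p-1, p); note h(p,0) = C(p-1,p) = 0 for p ≥ 1. -/
def h (p s : ℕ) : ℕ := Nat.choose (s + p - 1) p

/-- g_k(x_1,…,x_k) = Σ_{j=1}^k h(j, x_1+⋯+x_j), coordinates given by x 0, x 1, …. -/
def g (k : ℕ) (x : ℕ → ℕ) : ℕ :=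
  ∑ j ∈ Finset.range k, h (j + 1) (∑ i ∈ Finset.range (j + 1), x i)

lemma hockey (t k : ℕ) :
    ∑ j ∈ Finset.range (k + 1), (t + j).choose t = (t + k + 1).choose (t + 1) := by
  induction k with
  | zero => simp
  | succ k ih =>
    rw [Finset.sum_range_succ, ih, show t + (k + 1) = t + k + 1 by ring,
      show t + k + 1 + 1 = (t + k + 1) + 1 by ring, Nat.choose_succ_succ]
    exact Nat.add_comm _ _

lemma h_ge (k : ℕ) (hk : 1 ≤ k) (s : ℕ) : s ≤ h k s := by
  induction k with
  | zero => omega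
  | succ k ih =>
    rcases Nat.eq_zero_or_pos k with rfl | hk'
    · simp [h]
    rcases Nat.eq_zero_or_pos s with rfl | hs
    · omega
    have h1 : h (k + 1) s = (s + k - 1).choose k + (s + k - 1).choose (k + 1) := by
      have : s + (k + 1) - 1 = (s + k - 1) + 1 := by omega
      rw [h, this, Nat.choose_succ_succ]
    have := ih hk'
    rw [h] at this
    omega

lemma g_lower (k : ℕ) (hk : 1 ≤ k) (x : ℕ → ℕ) :
    h k (∑ i ∈ Finset.range k, x i) ≤ g k x := by
  obtain ⟨m, rfl⟩ : ∃ m, k = m + 1 := ⟨k - 1, by omega⟩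
  exact Finset.single_le_sum
    (f := fun j => h (j + 1) (∑ i ∈ Finset.range (j + 1), x i))
    (fun _ _ => Nat.zero_le _) (Finset.self_mem_range_succ m)

lemma g_upper' (k : ℕ) (hk : 1 ≤ k) (x : ℕ → ℕ) (s : ℕ)
    (hs : ∑ i ∈ Finset.range k, x i = s) :
    g k x < h k (s + 1) := by
  have step1 : g k x ≤ ∑ j ∈ Finset.range k, (s + j).choose (j + 1) := by
    apply Finset.sum_le_sum
    intro j hj
    have hsub : ∑ i ∈ Finset.range (j + 1), x i ≤ s := by
      rw [← hs]
      exact Finset.sum_le_sum_of_subset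
        (Finset.range_subset_range.mpr (Finset.mem_range.mp hj))
    have heq : h (j + 1) (∑ i ∈ Finset.range (j + 1), x i)
        = ((∑ i ∈ Finset.range (j + 1), x i) + j).choose (j + 1) := by
      rw [h, show (∑ i ∈ Finset.range (j + 1), x i) + (j + 1) - 1
        = (∑ i ∈ Finset.range (j + 1), x i) + j by omega]
    rw [heq]
    exact Nat.choose_le_choose _ (by omega)
  have hks : h k (s + 1) = (s + k).choose k := by
    rw [h, show s + 1 + k - 1 = s + k by omega]
  rw [hks]
  rcases Nat.eq_zero_or_pos s with rfl | hspos
  · have : ∑ j ∈ Finset.range k, (0 + j).choose (j + 1) = 0 :=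
      Finset.sum_eq_zero fun j _ => Nat.choose_eq_zero_of_lt (by omega)
    have h2 : (0 + k).choose k = 1 := by simp
    omega
  obtain ⟨t, rfl⟩ : ∃ t, s = t + 1 := ⟨s - 1, by omega⟩
  have term_eq : ∀ j, (t + 1 + j).choose (j + 1) = (t + (j + 1)).choose t := by
    intro j
    have h1 : (t + 1 + j).choose (t + 1 + j - (j + 1)) = (t + 1 + j).choose (j + 1) :=
      Nat.choose_symm (by omega)
    have h2 : t + 1 + j - (j + 1) = t := by omega
    rw [h2] at h1
    rw [← h1, show t + 1 + j = t + (j + 1) by ring]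
  have hsum : ∑ j ∈ Finset.range k, (t + 1 + j).choose (j + 1)
      = ∑ j ∈ Finset.range k, (t + (j + 1)).choose t := by
    exact Finset.sum_congr rfl fun j _ => term_eq j
  have hpeel : ∑ j ∈ Finset.range (k + 1), (t + j).choose t
      = (∑ j ∈ Finset.range k, (t + (j + 1)).choose t) + (t + 0).choose t :=
    Finset.sum_range_succ' _ _
  have hh := hockey t k
  have hsymm : (t + 1 + k).choose k = (t + k + 1).choose (t + 1) := by
    have h1 : (t + k + 1).choose (t + k + 1 - k) = (t + k + 1).choose k :=
      Nat.choose_symm (by omega)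
    have h2 : t + k + 1 - k = t + 1 := by omega
    rw [h2] at h1
    rw [show t + 1 + k = t + k + 1 by ring, ← h1]
  simp only [Nat.add_zero, Nat.choose_self] at hpeel
  omega

lemma g_upper (k : ℕ) (hk : 1 ≤ k) (x : ℕ → ℕ) :
    g k x < h k ((∑ i ∈ Finset.range k, x i) + 1) :=
  g_upper' k hk x _ rfl

theorem stmt19 (k : ℕ) (hk : 1 ≤ k) :
    (∀ n : ℕ, {x : Fin k → ℕ |
        g k (fun i => if hi : i < k then x ⟨i, hi⟩ else 0) ≤ n}.Finite) ∧
    (∀ s : ℕ, ∀ x : ℕ → ℕ, (∑ i ∈ Finset.range k, x i) = s →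
        h k s ≤ g k x ∧ g k x < h k (s + 1)) := by
  constructor
  · intro n
    apply Set.Finite.subset (Set.finite_Icc (0 : Fin k → ℕ) (fun _ => n))
    intro x hx
    simp only [Set.mem_setOf_eq] at hx
    set x' : ℕ → ℕ := fun i => if hi : i < k then x ⟨i, hi⟩ else 0 with hx'
    set s := ∑ i ∈ Finset.range k, x' i with hs
    have hsn : s ≤ n := le_trans (le_trans (h_ge k hk s) (g_lower k hk x')) hx
    rw [Set.mem_Icc]
    refine ⟨fun i => Nat.zero_le _, fun i => ?_⟩
    have hxi : x i = x' i.val := by simp [hx', i.isLt]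
    have : x' i.val ≤ s := by
      rw [hs]
      exact Finset.single_le_sum (fun _ _ => Nat.zero_le _)
        (Finset.mem_range.mpr i.isLt)
    calc x i = x' i.val := hxi
      _ ≤ s := this
      _ ≤ n := hsn
  · intro s x hxs
    subst hxs
    exact ⟨g_lower k hk x, g_upper k hk x⟩
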